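/- arXiv:1807.07034 — 6 statements merged into one kernel-verified Lean document; each statement's English description precedes it below -/
import Mathlib

section
/- Let V be the value function of the unit-demand stochastic knapsack problem with time-varying price distributions (defined in context), where additionally the price distribution is stationary in time (θ_{n,i} = θ_i for all n). Then V is concave in the time variable: V(n-1,d) - V(n,d) ≤ V(n,d) - V(n+1,d) for all 2 ≤ n ≤ N and all d ≥ 0. -/
lemma aux_max_sub (a b c d : ℝ) : max a b - max c d ≤ max (a - c) (b - d) := by
  rcases le_total a b with h | h
  · rw [max_eq_right h]
    have h1 := le_max_right (a - c) (b - d)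
    have h2 := le_max_right c d
    linarith
  · rw [max_eq_left h]
    have h1 := le_max_left (a - c) (b - d)
    have h2 := le_max_left c d
    linarith

lemma aux_min_sub (a b c d : ℝ) : min (a - c) (b - d) ≤ max a b - max c d := by
  rcases le_total c d with h | h
  · rw [max_eq_right h]
    have h1 := min_le_right (a - c) (b - d)
    have h2 := le_max_right a b
    linarith
  · rw [max_eq_left h]
    have h1 := min_le_left (a - c) (b - d)
    have h2 := le_max_left a b
    linarith

/-- Concavity in time of the value function under a stationary price distribution. -/
theorem stmt2 (N I : ℕ) (hN : 2 ≤ N) (p : Fin I → ℝ)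
    (hp : StrictAnti p) (hppos : ∀ i, 0 < p i)
    (θ : Fin I → ℝ) (hθ : ∀ i, 0 ≤ θ i)
    (hθsum : ∑ i, θ i ≤ 1)
    (V : ℕ → ℕ → ℝ)
    (hterm : ∀ d, V (N + 1) d = 0)
    (hzero : ∀ n, 1 ≤ n → n ≤ N → V n 0 = V (n + 1) 0)
    (hrec : ∀ n d, 1 ≤ n → n ≤ N →
      V n (d + 1) = (1 - ∑ i, θ i) * V (n + 1) (d + 1)
        + ∑ i, θ i * max (p i + V (n + 1) d) (V (n + 1) (d + 1))) :
    ∀ n d, 2 ≤ n → n ≤ N → V (n - 1) d - V n d ≤ V n d - V (n + 1) d := by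
  have hS : (0:ℝ) ≤ 1 - ∑ i, θ i := by linarith
  -- recursion for the time increment
  have hDrec : ∀ n, 1 ≤ n → n + 1 ≤ N → ∀ d,
      V n (d+1) - V (n+1) (d+1) =
        (1 - ∑ i, θ i) * (V (n+1) (d+1) - V (n+1+1) (d+1))
        + ∑ i, θ i * (max (p i + V (n+1) d) (V (n+1) (d+1))
            - max (p i + V (n+1+1) d) (V (n+1+1) (d+1))) := by
    intro n h1 h2 d
    rw [hrec n d h1 (by omega), hrec (n+1) d (by omega) h2]
    simp only [mul_sub, Finset.sum_sub_distrib]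
    ring
  -- base facts at n = N
  have hVN0 : V N 0 = 0 := by rw [hzero N (by omega) le_rfl, hterm]
  have hVN : ∀ d, V N (d+1) = ∑ i, θ i * p i := by
    intro d
    rw [hrec N d (by omega) le_rfl]
    simp only [hterm]
    have : ∀ i : Fin I, max (p i + (0:ℝ)) 0 = p i := by
      intro i; rw [add_zero]; exact max_eq_left (hppos i).le
    simp only [this]
    ring
  have hc : (0:ℝ) ≤ ∑ i, θ i * p i :=
    Finset.sum_nonneg fun i _ => mul_nonneg (hθ i) (hppos i).le
  -- main induction: D(n,·) is nonnegative and nondecreasing in d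
  have main : ∀ k n, 1 ≤ n → n + k = N →
      (∀ d, 0 ≤ V n d - V (n+1) d) ∧
      (∀ d, V n d - V (n+1) d ≤ V n (d+1) - V (n+1) (d+1)) := by
    intro k
    induction k with
    | zero =>
      intro n h1 h2
      obtain rfl : n = N := by omega
      constructor
      · intro d
        cases d with
        | zero => rw [hVN0, hterm]; norm_num
        | succ e => rw [hVN e, hterm]; linarith
      · intro d
        cases d with
        | zero => rw [hVN0, hterm, hterm, hVN 0]; linarith
        | succ e => rw [hVN e, hterm, hterm, hVN (e+1)]
    | succ k ih =>
      intro n h1 h2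
      obtain ⟨ihpos, ihmono⟩ := ih (n+1) (by omega) (by omega)
      have hrecD := hDrec n h1 (by omega)
      have hzn : V n 0 - V (n+1) 0 = 0 := by rw [hzero n h1 (by omega)]; ring
      have hpos : ∀ d, 0 ≤ V n d - V (n+1) d := by
        intro d
        cases d with
        | zero => rw [hzn]
        | succ e =>
          rw [hrecD e]
          have hsum : 0 ≤ ∑ i, θ i * (max (p i + V (n+1) e) (V (n+1) (e+1))
              - max (p i + V (n+1+1) e) (V (n+1+1) (e+1))) := by
            apply Finset.sum_nonneg
            intro i _
            apply mul_nonneg (hθ i)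
            have h1 := aux_min_sub (p i + V (n+1) e) (V (n+1) (e+1))
              (p i + V (n+1+1) e) (V (n+1+1) (e+1))
            have h2 : (0:ℝ) ≤ min ((p i + V (n+1) e) - (p i + V (n+1+1) e))
                ((V (n+1) (e+1)) - (V (n+1+1) (e+1))) := by
              apply le_min
              · have := ihpos e; linarith
              · exact ihpos (e+1)
            linarith
          have := mul_nonneg hS (ihpos (e+1))
          linarith
      refine ⟨hpos, ?_⟩
      intro d
      cases d with
      | zero => rw [hzn]; exact hpos 1
      | succ e =>
        rw [hrecD e, hrecD (e+1)]
        apply add_le_add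
        · exact mul_le_mul_of_nonneg_left (ihmono (e+1)) hS
        · apply Finset.sum_le_sum
          intro i _
          apply mul_le_mul_of_nonneg_left _ (hθ i)
          have h1 := aux_max_sub (p i + V (n+1) e) (V (n+1) (e+1))
            (p i + V (n+1+1) e) (V (n+1+1) (e+1))
          have h2 := aux_min_sub (p i + V (n+1) (e+1)) (V (n+1) (e+2))
            (p i + V (n+1+1) (e+1)) (V (n+1+1) (e+2))
          have h3 := ihmono e
          have h4 := ihmono (e+1)
          have hmax : max ((p i + V (n+1) e) - (p i + V (n+1+1) e))
              ((V (n+1) (e+1)) - (V (n+1+1) (e+1)))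
              ≤ V (n+1) (e+1) - V (n+1+1) (e+1) := by
            apply max_le _ le_rfl
            linarith
          have hmin : V (n+1) (e+1) - V (n+1+1) (e+1)
              ≤ min ((p i + V (n+1) (e+1)) - (p i + V (n+1+1) (e+1)))
              ((V (n+1) (e+2)) - (V (n+1+1) (e+2))) := by
            apply le_min _ h4
            linarith
          linarith
  -- conclusion
  intro n d h2n hnN
  obtain ⟨m, rfl⟩ : ∃ m, n = m + 1 := ⟨n - 1, by omega⟩
  simp only [Nat.add_sub_cancel]
  obtain ⟨-, hmono⟩ := main (N - (m+1)) (m+1) (by omega) (by omega)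
  cases d with
  | zero =>
    have e1 := hzero m (by omega) (by omega)
    have e2 := hzero (m+1) (by omega) (by omega)
    rw [e1, e2]
  | succ e =>
    rw [hDrec m (by omega) (by omega) e]
    have hbound : ∑ i, θ i * (max (p i + V (m+1) e) (V (m+1) (e+1))
        - max (p i + V (m+1+1) e) (V (m+1+1) (e+1)))
        ≤ (∑ i, θ i) * (V (m+1) (e+1) - V (m+1+1) (e+1)) := by
      rw [Finset.sum_mul]
      apply Finset.sum_le_sum
      intro i _
      apply mul_le_mul_of_nonneg_left _ (hθ i)
      have h1 := aux_max_sub (p i + V (m+1) e) (V (m+1) (e+1))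
        (p i + V (m+1+1) e) (V (m+1+1) (e+1))
      have h3 := hmono e
      have hmax : max ((p i + V (m+1) e) - (p i + V (m+1+1) e))
          ((V (m+1) (e+1)) - (V (m+1+1) (e+1)))
          ≤ V (m+1) (e+1) - V (m+1+1) (e+1) := by
        apply max_le _ le_rfl
        linarith
      linarith
    have hid : (1 - ∑ i, θ i) * (V (m+1) (e+1) - V (m+1+1) (e+1))
        + (∑ i, θ i) * (V (m+1) (e+1) - V (m+1+1) (e+1))
        = V (m+1) (e+1) - V (m+1+1) (e+1) := by ring
    linarith
end

section
/- Let V be the value function of the unit-demand stochastic knapsack problem with time-varying price distributions (defined in context). Then for every n ∈ {1,...,N+1}, the function d ↦ V(n,d) is concave: V(n,d) - V(n,d-1) ≥ V(n,d+1) - V(n,d) for all d ≥ 1. -/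
lemma aux1 (a w0 w1 w2 : ℝ) (h : w2 - w1 ≤ w1 - w0) :
    max (a + w1) w2 + w0 ≤ 2 * max (a + w0) w1 := by
  have g1 := le_max_left (a + w0) w1
  have g2 := le_max_right (a + w0) w1
  rcases max_cases (a + w1) w2 with ⟨e1, c1⟩ | ⟨e1, c1⟩ <;> rw [e1] <;> linarith

lemma aux2 (a w0 w1 w2 w3 : ℝ) (h1 : w3 - w2 ≤ w2 - w1) (h2 : w2 - w1 ≤ w1 - w0) :
    max (a + w2) w3 + max (a + w0) w1 ≤ 2 * max (a + w1) w2 := by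
  have g1 := le_max_left (a + w1) w2
  have g2 := le_max_right (a + w1) w2
  rcases max_cases (a + w2) w3 with ⟨e1, c1⟩ | ⟨e1, c1⟩ <;>
    rcases max_cases (a + w0) w1 with ⟨e2, c2⟩ | ⟨e2, c2⟩ <;>
    rw [e1, e2] <;> linarith

/-- Concavity in inventory of the unit-demand stochastic knapsack value function. -/
theorem stmt3 (N I : ℕ) (hN : 1 ≤ N) (p : Fin I → ℝ)
    (hp : StrictAnti p) (hppos : ∀ i, 0 < p i)
    (θ : ℕ → Fin I → ℝ) (hθ : ∀ n i, 0 ≤ θ n i)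
    (hθsum : ∀ n, ∑ i, θ n i ≤ 1)
    (V : ℕ → ℕ → ℝ)
    (hterm : ∀ d, V (N + 1) d = 0)
    (hzero : ∀ n, 1 ≤ n → n ≤ N → V n 0 = V (n + 1) 0)
    (hrec : ∀ n d, 1 ≤ n → n ≤ N →
      V n (d + 1) = (1 - ∑ i, θ n i) * V (n + 1) (d + 1)
        + ∑ i, θ n i * max (p i + V (n + 1) d) (V (n + 1) (d + 1))) :
    ∀ n d, 1 ≤ n → n ≤ N + 1 →
      V n (d + 2) - V n (d + 1) ≤ V n (d + 1) - V n d := by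
  have key : ∀ j n, n + j = N + 1 → 1 ≤ n →
      ∀ d, V n (d + 2) - V n (d + 1) ≤ V n (d + 1) - V n d := by
    intro j
    induction j with
    | zero =>
      intro n hn _ d
      simp only [Nat.add_zero] at hn
      subst hn
      simp [hterm]
    | succ j ih =>
      intro n hn hn1 d
      have hnN : n ≤ N := by omega
      have ihW := ih (n + 1) (by omega) (by omega)
      have hS : (0:ℝ) ≤ 1 - ∑ i, θ n i := by linarith [hθsum n]
      cases d with
      | zero =>
        rw [hrec n 1 hn1 hnN, hrec n 0 hn1 hnN, hzero n hn1 hnN]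
        have hWc := ihW 0
        have hsum : ∑ i, θ n i * max (p i + V (n+1) 1) (V (n+1) 2)
            + ∑ i, θ n i * V (n+1) 0
            ≤ 2 * ∑ i, θ n i * max (p i + V (n+1) 0) (V (n+1) 1) := by
          rw [← Finset.sum_add_distrib, Finset.mul_sum]
          apply Finset.sum_le_sum
          intro i _
          have h := aux1 (p i) (V (n+1) 0) (V (n+1) 1) (V (n+1) 2) hWc
          nlinarith [hθ n i]
        have hmulW := mul_le_mul_of_nonneg_left hWc hS
        have hsw : ∑ i, θ n i * V (n+1) 0 = (∑ i, θ n i) * V (n+1) 0 :=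
          (Finset.sum_mul _ _ _).symm
        nlinarith [hsum, hmulW, hsw]
      | succ d =>
        rw [hrec n (d+2) hn1 hnN, hrec n (d+1) hn1 hnN, hrec n d hn1 hnN]
        have hWc1 := ihW (d+1)
        have hWc2 := ihW d
        have hsum : ∑ i, θ n i * max (p i + V (n+1) (d+2)) (V (n+1) (d+3))
            + ∑ i, θ n i * max (p i + V (n+1) d) (V (n+1) (d+1))
            ≤ 2 * ∑ i, θ n i * max (p i + V (n+1) (d+1)) (V (n+1) (d+2)) := by
          rw [← Finset.sum_add_distrib, Finset.mul_sum]
          apply Finset.sum_le_sum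
          intro i _
          have h := aux2 (p i) (V (n+1) d) (V (n+1) (d+1)) (V (n+1) (d+2))
            (V (n+1) (d+3)) hWc1 hWc2
          nlinarith [hθ n i]
        have hmulW := mul_le_mul_of_nonneg_left hWc1 hS
        have e3 : d + 1 + 2 = d + 3 := rfl
        have e2 : d + 1 + 1 = d + 2 := rfl
        nlinarith [hsum, hmulW]
  intro n d hn hnN
  exact key (N + 1 - n) n (by omega) hn d
end

section
/- Let V be the value function of the unit-demand stochastic knapsack problem with time-varying price distributions (defined in context). Then V is submodular in (n,d): V(n,d) - V(n,d-1) ≥ V(n+1,d) - V(n+1,d-1) for all n ∈ {1,...,N} and d ≥ 1. -/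
private lemma maxL1 (p a1 a2 a3 : ℝ) (h : a3 - a2 ≤ a2 - a1) :
    a3 - a2 ≤ max (p + a2) a3 - max (p + a1) a2 := by
  rcases max_cases (p + a1) a2 with ⟨e1, h1⟩ | ⟨e1, h1⟩ <;>
  rcases max_cases (p + a2) a3 with ⟨e2, h2⟩ | ⟨e2, h2⟩ <;>
  rw [e1, e2] <;> linarith

private lemma maxL2 (p a1 a2 a3 : ℝ) (h : a3 - a2 ≤ a2 - a1) :
    max (p + a2) a3 - max (p + a1) a2 ≤ a2 - a1 := by
  rcases max_cases (p + a1) a2 with ⟨e1, h1⟩ | ⟨e1, h1⟩ <;>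
  rcases max_cases (p + a2) a3 with ⟨e2, h2⟩ | ⟨e2, h2⟩ <;>
  rw [e1, e2] <;> linarith

/-- Submodularity in (time, inventory) of the unit-demand value function. -/
theorem stmt4 (N I : ℕ) (hN : 1 ≤ N) (p : Fin I → ℝ)
    (hp : StrictAnti p) (hppos : ∀ i, 0 < p i)
    (θ : ℕ → Fin I → ℝ) (hθ : ∀ n i, 0 ≤ θ n i)
    (hθsum : ∀ n, ∑ i, θ n i ≤ 1)
    (V : ℕ → ℕ → ℝ)
    (hterm : ∀ d, V (N + 1) d = 0)
    (hzero : ∀ n, 1 ≤ n → n ≤ N → V n 0 = V (n + 1) 0)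
    (hrec : ∀ n d, 1 ≤ n → n ≤ N →
      V n (d + 1) = (1 - ∑ i, θ n i) * V (n + 1) (d + 1)
        + ∑ i, θ n i * max (p i + V (n + 1) d) (V (n + 1) (d + 1))) :
    ∀ n d, 1 ≤ n → n ≤ N →
      V (n + 1) (d + 1) - V (n + 1) d ≤ V n (d + 1) - V n d := by
  -- concavity of V n · for all admissible n, by downward induction
  have conc : ∀ k n, N + 1 = n + k → 1 ≤ n →
      ∀ d, V n (d + 2) - V n (d + 1) ≤ V n (d + 1) - V n d := by
    intro k
    induction k with
    | zero =>
      intro n hn _ d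
      have hn' : n = N + 1 := by omega
      subst hn'
      simp [hterm]
    | succ k ih =>
      intro n hn hn1 d
      have hnN : n ≤ N := by omega
      have ihn : ∀ d, V (n+1) (d + 2) - V (n+1) (d + 1) ≤ V (n+1) (d + 1) - V (n+1) d :=
        ih (n + 1) (by omega) (by omega)
      have h1S : (0:ℝ) ≤ 1 - ∑ i, θ n i := by linarith [hθsum n]
      cases d with
      | zero =>
        rw [hrec n 1 hn1 hnN, hrec n 0 hn1 hnN, hzero n hn1 hnN]
        have hw : V (n+1) 2 - V (n+1) 1 ≤ V (n+1) 1 - V (n+1) 0 := ihn 0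
        have hsum : (∑ i, θ n i * max (p i + V (n+1) 1) (V (n+1) 2))
            + ∑ i, θ n i * V (n+1) 0
            ≤ 2 * ∑ i, θ n i * max (p i + V (n+1) 0) (V (n+1) 1) := by
          rw [← Finset.sum_add_distrib, Finset.mul_sum]
          refine Finset.sum_le_sum fun i _ => ?_
          have h2 := maxL2 (p i) (V (n+1) 0) (V (n+1) 1) (V (n+1) 2) hw
          have h3 := le_max_right (p i + V (n+1) 0) (V (n+1) 1)
          have := mul_le_mul_of_nonneg_left
            (by linarith : max (p i + V (n+1) 1) (V (n+1) 2) + V (n+1) 0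
              ≤ 2 * max (p i + V (n+1) 0) (V (n+1) 1)) (hθ n i)
          linarith
        have hS : ∑ i, θ n i * V (n+1) 0 = (∑ i, θ n i) * V (n+1) 0 :=
          (Finset.sum_mul _ _ _).symm
        have hwm := mul_le_mul_of_nonneg_left
          (by linarith : V (n+1) 2 + V (n+1) 0 ≤ 2 * V (n+1) 1) h1S
        rw [hS] at hsum
        nlinarith [hsum, hwm]
      | succ d =>
        rw [hrec n (d+2) hn1 hnN, hrec n (d+1) hn1 hnN, hrec n d hn1 hnN]
        have hw1 : V (n+1) (d+2) - V (n+1) (d+1) ≤ V (n+1) (d+1) - V (n+1) d := ihn d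
        have hw2 : V (n+1) (d+3) - V (n+1) (d+2) ≤ V (n+1) (d+2) - V (n+1) (d+1) :=
          ihn (d+1)
        have hsum : (∑ i, θ n i * max (p i + V (n+1) (d+2)) (V (n+1) (d+3)))
            + ∑ i, θ n i * max (p i + V (n+1) d) (V (n+1) (d+1))
            ≤ 2 * ∑ i, θ n i * max (p i + V (n+1) (d+1)) (V (n+1) (d+2)) := by
          rw [← Finset.sum_add_distrib, Finset.mul_sum]
          refine Finset.sum_le_sum fun i _ => ?_
          have h2 := maxL2 (p i) (V (n+1) (d+1)) (V (n+1) (d+2)) (V (n+1) (d+3)) hw2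
          have h1 := maxL1 (p i) (V (n+1) d) (V (n+1) (d+1)) (V (n+1) (d+2)) hw1
          have := mul_le_mul_of_nonneg_left
            (by linarith : max (p i + V (n+1) (d+2)) (V (n+1) (d+3))
              + max (p i + V (n+1) d) (V (n+1) (d+1))
              ≤ 2 * max (p i + V (n+1) (d+1)) (V (n+1) (d+2))) (hθ n i)
          linarith
        have hwm := mul_le_mul_of_nonneg_left
          (by linarith : V (n+1) (d+3) + V (n+1) (d+1) ≤ 2 * V (n+1) (d+2)) h1S
        nlinarith [hsum, hwm]
  -- submodularity
  intro n d hn1 hnN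
  have cc : ∀ d, V (n+1) (d + 2) - V (n+1) (d + 1) ≤ V (n+1) (d + 1) - V (n+1) d :=
    conc (N - n) (n + 1) (by omega) (by omega)
  have h1S : (0:ℝ) ≤ 1 - ∑ i, θ n i := by linarith [hθsum n]
  cases d with
  | zero =>
    rw [hrec n 0 hn1 hnN, hzero n hn1 hnN]
    have hsum : (∑ i, θ n i * V (n+1) 1)
        ≤ ∑ i, θ n i * max (p i + V (n+1) 0) (V (n+1) 1) :=
      Finset.sum_le_sum fun i _ =>
        mul_le_mul_of_nonneg_left (le_max_right _ _) (hθ n i)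
    have hS : ∑ i, θ n i * V (n+1) 1 = (∑ i, θ n i) * V (n+1) 1 :=
      (Finset.sum_mul _ _ _).symm
    rw [hS] at hsum
    nlinarith [hsum]
  | succ d =>
    rw [hrec n (d+1) hn1 hnN, hrec n d hn1 hnN]
    have hw : V (n+1) (d+2) - V (n+1) (d+1) ≤ V (n+1) (d+1) - V (n+1) d := cc d
    have hsum : (∑ i, θ n i * (max (p i + V (n+1) d) (V (n+1) (d+1))
          + (V (n+1) (d+2) - V (n+1) (d+1))))
        ≤ ∑ i, θ n i * max (p i + V (n+1) (d+1)) (V (n+1) (d+2)) := by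
      refine Finset.sum_le_sum fun i _ => ?_
      have h1 := maxL1 (p i) (V (n+1) d) (V (n+1) (d+1)) (V (n+1) (d+2)) hw
      exact mul_le_mul_of_nonneg_left (by linarith) (hθ n i)
    have hexp : (∑ i, θ n i * (max (p i + V (n+1) d) (V (n+1) (d+1))
          + (V (n+1) (d+2) - V (n+1) (d+1))))
        = (∑ i, θ n i * max (p i + V (n+1) d) (V (n+1) (d+1)))
          + (∑ i, θ n i) * (V (n+1) (d+2) - V (n+1) (d+1)) := by
      rw [Finset.sum_mul, ← Finset.sum_add_distrib]
      exact Finset.sum_congr rfl fun i _ => by ring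
    rw [hexp] at hsum
    nlinarith [hsum]
end

section
/- Let V be the value function of the unit-demand stochastic knapsack problem with time-varying price distributions (defined in context). Then V satisfies the 'submodular-plus' property: V(n,d+1) - V(n,d) ≤ V(n+1,d) - V(n+1,d-1) for all n ∈ {1,...,N} and d ≥ 1. -/
private lemma maxA (p a b c : ℝ) (hconc : c - b ≤ b - a) :
    max (p + b) c ≤ max (p + a) b + (b - a) := by
  apply max_le
  · have := le_max_left (p + a) b; linarith
  · have := le_max_right (p + a) b; linarith

private lemma maxB (p a b c : ℝ) (hconc : c - b ≤ b - a) :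
    max (p + a) b ≤ max (p + b) c - (c - b) := by
  apply max_le
  · have := le_max_left (p + b) c; linarith
  · have := le_max_right (p + b) c; linarith

/-- The "submodular-plus" property of the unit-demand value function. -/
theorem stmt5 (N I : ℕ) (hN : 1 ≤ N) (p : Fin I → ℝ)
    (hp : StrictAnti p) (hppos : ∀ i, 0 < p i)
    (θ : ℕ → Fin I → ℝ) (hθ : ∀ n i, 0 ≤ θ n i)
    (hθsum : ∀ n, ∑ i, θ n i ≤ 1)
    (V : ℕ → ℕ → ℝ)
    (hterm : ∀ d, V (N + 1) d = 0)
    (hzero : ∀ n, 1 ≤ n → n ≤ N → V n 0 = V (n + 1) 0)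
    (hrec : ∀ n d, 1 ≤ n → n ≤ N →
      V n (d + 1) = (1 - ∑ i, θ n i) * V (n + 1) (d + 1)
        + ∑ i, θ n i * max (p i + V (n + 1) d) (V (n + 1) (d + 1))) :
    ∀ n d, 1 ≤ n → n ≤ N →
      V n (d + 2) - V n (d + 1) ≤ V (n + 1) (d + 1) - V (n + 1) d := by
  have key : ∀ m n, 1 ≤ n → n ≤ N → N = n + m →
      (∀ d, V n (d + 2) - V n (d + 1) ≤ V (n + 1) (d + 1) - V (n + 1) d) ∧
      (∀ d, V (n + 1) (d + 1) - V (n + 1) d ≤ V n (d + 1) - V n d) := by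
    intro m
    induction m with
    | zero =>
      intro n h1 h2 h3
      have hn : n = N := by omega
      subst hn
      have hVN : ∀ d : ℕ, V n (d + 1) = ∑ i, θ n i * p i := by
        intro d
        rw [hrec n d h1 le_rfl]
        simp only [hterm, mul_zero, add_zero, zero_add, sub_zero]
        congr 1
        funext i
        rw [max_eq_left (hppos i).le]
      have hVN0 : V n 0 = 0 := by rw [hzero n h1 le_rfl, hterm]
      have hsum : 0 ≤ ∑ i, θ n i * p i :=
        Finset.sum_nonneg fun i _ => mul_nonneg (hθ n i) (hppos i).le
      constructor
      · intro d; rw [hVN, hVN, hterm, hterm]; linarith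
      · intro d
        rw [hterm, hterm]
        cases d with
        | zero => rw [hVN, hVN0]; linarith
        | succ e => rw [hVN, hVN]; linarith
    | succ m ih =>
      intro n h1 h2 h3
      have h2' : n + 1 ≤ N := by omega
      obtain ⟨ihA, ihB⟩ := ih (n + 1) (by omega) h2' (by omega)
      have conc : ∀ d, V (n+1) (d+2) - V (n+1) (d+1) ≤ V (n+1) (d+1) - V (n+1) d :=
        fun d => le_trans (ihA d) (ihB d)
      constructor
      · intro d
        rw [hrec n (d+1) h1 h2, hrec n d h1 h2]
        have hc := conc d
        have hsumle : ∑ i, θ n i * max (p i + V (n+1) (d+1)) (V (n+1) (d+2))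
            ≤ (∑ i, θ n i * max (p i + V (n+1) d) (V (n+1) (d+1)))
              + (∑ i, θ n i) * (V (n+1) (d+1) - V (n+1) d) := by
          rw [Finset.sum_mul, ← Finset.sum_add_distrib]
          apply Finset.sum_le_sum
          intro i _
          rw [← mul_add]
          exact mul_le_mul_of_nonneg_left (maxA (p i) _ _ _ hc) (hθ n i)
        have hlin : (1 - ∑ i, θ n i) * (V (n+1) (d+2) - V (n+1) (d+1))
            ≤ (1 - ∑ i, θ n i) * (V (n+1) (d+1) - V (n+1) d) :=
          mul_le_mul_of_nonneg_left hc (by linarith [hθsum n])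
        nlinarith [hsumle, hlin]
      · intro d
        cases d with
        | zero =>
          rw [hrec n 0 h1 h2, hzero n h1 h2]
          have hsumge : (∑ i, θ n i) * V (n+1) 1
              ≤ ∑ i, θ n i * max (p i + V (n+1) 0) (V (n+1) 1) := by
            rw [Finset.sum_mul]
            apply Finset.sum_le_sum
            intro i _
            exact mul_le_mul_of_nonneg_left (le_max_right _ _) (hθ n i)
          nlinarith [hsumge]
        | succ e =>
          rw [hrec n (e+1) h1 h2, hrec n e h1 h2]
          have hc := conc e
          have hsumle : ∑ i, θ n i * max (p i + V (n+1) e) (V (n+1) (e+1))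
              ≤ (∑ i, θ n i * max (p i + V (n+1) (e+1)) (V (n+1) (e+2)))
                - (∑ i, θ n i) * (V (n+1) (e+2) - V (n+1) (e+1)) := by
            rw [Finset.sum_mul, ← Finset.sum_sub_distrib]
            apply Finset.sum_le_sum
            intro i _
            rw [← mul_sub]
            exact mul_le_mul_of_nonneg_left (maxB (p i) _ _ _ hc) (hθ n i)
          nlinarith [hsumle]
  intro n d h1 h2
  exact (key (N - n) n h1 h2 (by omega)).1 d
end

section
/- Let V be the value function of the unit-demand stochastic knapsack problem (defined in context). For any price p > 0, time n ∈ {1,...,N} and inventory d ≥ 1, if p + V(n+1,d-1) ≥ V(n+1,d) (i.e., accepting price p is optimal at state (n,d)), then p + V(n+1,d) ≥ V(n+1,d+1) (accepting price p is also optimal at state (n,d+1)). Equivalently, the acceptance threshold is monotone in inventory. -/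
/-- Monotonicity of the acceptance threshold in inventory: if accepting price `q`
is optimal at state (n,d), it is also optimal at state (n,d+1). -/
theorem stmt8 (N I : ℕ) (hN : 1 ≤ N) (p : Fin I → ℝ)
    (hp : StrictAnti p) (hppos : ∀ i, 0 < p i)
    (θ : ℕ → Fin I → ℝ) (hθ : ∀ n i, 0 ≤ θ n i)
    (hθsum : ∀ n, ∑ i, θ n i ≤ 1)
    (V : ℕ → ℕ → ℝ)
    (hterm : ∀ d, V (N + 1) d = 0)
    (hzero : ∀ n, 1 ≤ n → n ≤ N → V n 0 = V (n + 1) 0)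
    (hrec : ∀ n d, 1 ≤ n → n ≤ N →
      V n (d + 1) = (1 - ∑ i, θ n i) * V (n + 1) (d + 1)
        + ∑ i, θ n i * max (p i + V (n + 1) d) (V (n + 1) (d + 1))) :
    ∀ (q : ℝ), 0 < q → ∀ n d, 1 ≤ n → n ≤ N →
      V (n + 1) (d + 1) ≤ q + V (n + 1) d →
      V (n + 1) (d + 2) ≤ q + V (n + 1) (d + 1) := by
  have hθ0 : ∀ m, (0:ℝ) ≤ 1 - ∑ i, θ m i := fun m => by linarith [hθsum m]
  -- step lemma: concavity propagates backwards in time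
  have step : ∀ n, 1 ≤ n → n ≤ N →
      (∀ e, V (n+1) (e+2) + V (n+1) e ≤ 2 * V (n+1) (e+1)) →
      (∀ e, V n (e+2) + V n e ≤ 2 * V n (e+1)) := by
    intro n h1 hn hc e
    set W : ℕ → ℝ := fun k => V (n+1) k with hWdef
    set h : Fin I → ℕ → ℝ := fun i k => max (p i + W k) (W (k+1)) with hhdef
    have hWc : ∀ k, W (k+2) + W k ≤ 2 * W (k+1) := fun k => hc k
    have hA : ∀ i k, h i (k+1) ≤ h i k + (W (k+1) - W k) := by
      intro i k
      apply max_le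
      · have := le_max_left (p i + W k) (W (k+1))
        simp only [hhdef]; linarith
      · have := le_max_right (p i + W k) (W (k+1))
        simp only [hhdef]; linarith [hWc k]
    have hB : ∀ i k, h i k + (W (k+2) - W (k+1)) ≤ h i (k+1) := by
      intro i k
      rcases max_cases (p i + W k) (W (k+1)) with ⟨hEq, _⟩ | ⟨hEq, _⟩ <;>
        simp only [hhdef, hEq]
      · have := le_max_left (p i + W (k+1)) (W (k+2))
        linarith [hWc k]
      · have := le_max_right (p i + W (k+1)) (W (k+2))
        linarith
    have hconc : ∀ i k, h i (k+2) + h i k ≤ 2 * h i (k+1) := by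
      intro i k
      linarith [hA i (k+1), hB i k]
    match e with
    | Nat.succ e' =>
      rw [hrec n (e'+2) h1 hn, hrec n (e'+1) h1 hn, hrec n e' h1 hn]
      have hsum : ∑ i, (θ n i * h i (e'+2) + θ n i * h i e') ≤
          ∑ i, 2 * (θ n i * h i (e'+1)) := by
        apply Finset.sum_le_sum
        intro i _
        nlinarith [hconc i e', hθ n i]
      rw [Finset.sum_add_distrib, ← Finset.mul_sum] at hsum
      have hW0 : (1 - ∑ i, θ n i) * (W (e'+3) + W (e'+1)) ≤
          (1 - ∑ i, θ n i) * (2 * W (e'+2)) := by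
        apply mul_le_mul_of_nonneg_left _ (hθ0 n)
        linarith [hWc (e'+1)]
      simp only [hhdef, hWdef] at hsum hW0 ⊢
      have e1 : e' + 1 + 1 = e' + 2 := rfl
      have e2 : e' + 2 + 1 = e' + 3 := rfl
      rw [e1, e2] at *
      nlinarith [hsum, hW0]
    | 0 =>
      rw [hrec n 1 h1 hn, hrec n 0 h1 hn, hzero n h1 hn]
      have hsum : ∑ i, (θ n i * h i 1 + θ n i * W 0) ≤
          ∑ i, 2 * (θ n i * h i 0) := by
        apply Finset.sum_le_sum
        intro i _
        have h1' : h i 1 ≤ h i 0 + (W 1 - W 0) := hA i 0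
        have h2' : W 1 ≤ h i 0 := le_max_right _ _
        nlinarith [hθ n i]
      rw [Finset.sum_add_distrib, ← Finset.mul_sum, ← Finset.sum_mul] at hsum
      have hW0 : (1 - ∑ i, θ n i) * (W 2 + W 0) ≤
          (1 - ∑ i, θ n i) * (2 * W 1) := by
        apply mul_le_mul_of_nonneg_left _ (hθ0 n)
        linarith [hWc 0]
      simp only [hhdef, hWdef] at hsum hW0 ⊢
      nlinarith [hsum, hW0]
  -- backward induction
  have key : ∀ j n, 1 ≤ n → n + j = N + 1 →
      ∀ e, V n (e+2) + V n e ≤ 2 * V n (e+1) := by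
    intro j
    induction j with
    | zero =>
      intro n h1 hEq e
      have : n = N + 1 := by omega
      subst this
      simp [hterm]
    | succ j ih =>
      intro n h1 hEq e
      have hn : n ≤ N := by omega
      exact step n h1 hn (ih (n+1) (by omega) (by omega)) e
  intro q hq n d h1 hn hacc
  have hc := key (N - n) (n+1) (by omega) (by omega) d
  linarith
end

section
/- Let V be the value function of the unit-demand stochastic knapsack problem (defined in context). For any price p > 0, time n ∈ {1,...,N-1} and inventory d ≥ 1, if p + V(n+1,d-1) ≥ V(n+1,d) (accepting price p is optimal at state (n,d)), then p + V(n+2,d-1) ≥ V(n+2,d) (accepting price p is optimal at state (n+1,d)); i.e., the set of acceptable prices at a fixed inventory level grows as time progresses. -/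
private lemma key0 (p a0 a1 a2 : ℝ) (h : a2 + a0 ≤ 2*a1) :
    max (p+a1) a2 + a0 ≤ 2 * max (p+a0) a1 := by
  rcases max_cases (p+a1) a2 with ⟨e,_⟩|⟨e,_⟩ <;> rw [e] <;>
    linarith [le_max_left (p+a0) a1, le_max_right (p+a0) a1]

private lemma key1 (p a0 a1 a2 a3 : ℝ) (h1 : a2 + a0 ≤ 2*a1) (h2 : a3 + a1 ≤ 2*a2) :
    max (p+a2) a3 + max (p+a0) a1 ≤ 2 * max (p+a1) a2 := by
  rcases max_cases (p+a2) a3 with ⟨e1,_⟩|⟨e1,_⟩ <;>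
    rcases max_cases (p+a0) a1 with ⟨e2,_⟩|⟨e2,_⟩ <;> rw [e1,e2] <;>
    linarith [le_max_left (p+a1) a2, le_max_right (p+a1) a2]

private lemma key2 (p a0 a1 a2 : ℝ) (h : a2 + a0 ≤ 2*a1) :
    max (p+a0) a1 + (a2 - a1) ≤ max (p+a1) a2 := by
  rcases max_cases (p+a0) a1 with ⟨e,_⟩|⟨e,_⟩ <;> rw [e] <;>
    linarith [le_max_left (p+a1) a2, le_max_right (p+a1) a2]

/-- The set of acceptable prices at a fixed inventory level grows over time:
if accepting price `q` is optimal at state (n,d), it is optimal at (n+1,d). -/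
theorem stmt9 (N I : ℕ) (hN : 2 ≤ N) (p : Fin I → ℝ)
    (hp : StrictAnti p) (hppos : ∀ i, 0 < p i)
    (θ : ℕ → Fin I → ℝ) (hθ : ∀ n i, 0 ≤ θ n i)
    (hθsum : ∀ n, ∑ i, θ n i ≤ 1)
    (V : ℕ → ℕ → ℝ)
    (hterm : ∀ d, V (N + 1) d = 0)
    (hzero : ∀ n, 1 ≤ n → n ≤ N → V n 0 = V (n + 1) 0)
    (hrec : ∀ n d, 1 ≤ n → n ≤ N →
      V n (d + 1) = (1 - ∑ i, θ n i) * V (n + 1) (d + 1)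
        + ∑ i, θ n i * max (p i + V (n + 1) d) (V (n + 1) (d + 1))) :
    ∀ (q : ℝ), 0 < q → ∀ n d, 1 ≤ n → n ≤ N - 1 →
      V (n + 1) (d + 1) ≤ q + V (n + 1) d →
      V (n + 2) (d + 1) ≤ q + V (n + 2) d := by
  -- concavity of V in d, by backward induction on the time index
  have conc : ∀ k, k ≤ N → ∀ d,
      V (N + 1 - k) (d+2) + V (N + 1 - k) d ≤ 2 * V (N + 1 - k) (d+1) := by
    intro k
    induction k with
    | zero => intro _ d; simp [hterm]
    | succ k ih =>
      intro hk d
      have hk' : k ≤ N := by omega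
      have hm1 : 1 ≤ N + 1 - (k+1) := by omega
      have hmN : N + 1 - (k+1) ≤ N := by omega
      have heq : N + 1 - (k+1) + 1 = N + 1 - k := by omega
      set m := N + 1 - (k+1) with hm
      rw [← heq] at ih
      have IH := ih hk'
      have hSnn : (0:ℝ) ≤ 1 - ∑ i, θ m i := by linarith [hθsum m]
      cases d with
      | zero =>
        have h2 := hrec m 1 hm1 hmN
        have h1 := hrec m 0 hm1 hmN
        have h0 := hzero m hm1 hmN
        norm_num at h2 h1 ⊢
        rw [h2, h1, h0]
        have hmul := mul_le_mul_of_nonneg_left (IH 0) hSnn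
        have hs : ∑ i, (θ m i * max (p i + V (m+1) 1) (V (m+1) 2) + θ m i * V (m+1) 0)
            ≤ ∑ i, 2 * (θ m i * max (p i + V (m+1) 0) (V (m+1) 1)) := by
          refine Finset.sum_le_sum fun i _ => ?_
          have hk0 := key0 (p i) (V (m+1) 0) (V (m+1) 1) (V (m+1) 2) (IH 0)
          nlinarith [mul_le_mul_of_nonneg_left hk0 (hθ m i)]
        rw [Finset.sum_add_distrib, ← Finset.sum_mul, ← Finset.mul_sum] at hs
        linarith
      | succ e =>
        have E1 : e+1+2 = e+3 := by omega
        have E2 : e+1+1 = e+2 := by omega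
        have E3 : e+2+1 = e+3 := by omega
        have h3 := hrec m (e+2) hm1 hmN
        have h2 := hrec m (e+1) hm1 hmN
        have h1 := hrec m e hm1 hmN
        rw [E3] at h3
        rw [E2] at h2
        rw [E1, E2, h3, h2, h1]
        have IH1 := IH e
        have IH2 := IH (e+1)
        rw [E1, E2] at IH2
        have hmul := mul_le_mul_of_nonneg_left IH2 hSnn
        have hs : ∑ i, (θ m i * max (p i + V (m+1) (e+2)) (V (m+1) (e+3))
              + θ m i * max (p i + V (m+1) e) (V (m+1) (e+1)))
            ≤ ∑ i, 2 * (θ m i * max (p i + V (m+1) (e+1)) (V (m+1) (e+2))) := by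
          refine Finset.sum_le_sum fun i _ => ?_
          have hk1 := key1 (p i) (V (m+1) e) (V (m+1) (e+1)) (V (m+1) (e+2)) (V (m+1) (e+3)) IH1 IH2
          nlinarith [mul_le_mul_of_nonneg_left hk1 (hθ m i)]
        rw [Finset.sum_add_distrib, ← Finset.mul_sum] at hs
        linarith
  have concN : ∀ m, 1 ≤ m → m ≤ N + 1 → ∀ d, V m (d+2) + V m d ≤ 2 * V m (d+1) := by
    intro m h1 h2 d
    have h := conc (N+1-m) (by omega) d
    rwa [show N+1-(N+1-m) = m by omega] at h
  -- submodularity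
  have submod : ∀ m d, 1 ≤ m → m ≤ N →
      V (m+1) (d+1) - V (m+1) d ≤ V m (d+1) - V m d := by
    intro m d hm1 hmN
    have hSnn : (0:ℝ) ≤ 1 - ∑ i, θ m i := by linarith [hθsum m]
    cases d with
    | zero =>
      rw [hrec m 0 hm1 hmN, hzero m hm1 hmN]
      have hs : ∑ i, θ m i * V (m+1) 1
          ≤ ∑ i, θ m i * max (p i + V (m+1) 0) (V (m+1) 1) :=
        Finset.sum_le_sum fun i _ => mul_le_mul_of_nonneg_left (le_max_right _ _) (hθ m i)
      rw [← Finset.sum_mul] at hs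
      have hm' := mul_le_mul_of_nonneg_left (le_refl (V (m+1) 1)) hSnn
      linarith
    | succ e =>
      have E2 : e+1+1 = e+2 := by omega
      have h2 := hrec m (e+1) hm1 hmN
      have h1 := hrec m e hm1 hmN
      rw [E2] at h2
      rw [E2, h2, h1]
      have hc := concN (m+1) (by omega) (by omega) e
      have hs : ∑ i, (θ m i * max (p i + V (m+1) e) (V (m+1) (e+1))
            + θ m i * (V (m+1) (e+2) - V (m+1) (e+1)))
          ≤ ∑ i, θ m i * max (p i + V (m+1) (e+1)) (V (m+1) (e+2)) := by
        refine Finset.sum_le_sum fun i _ => ?_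
        have hk2 := key2 (p i) (V (m+1) e) (V (m+1) (e+1)) (V (m+1) (e+2)) hc
        nlinarith [mul_le_mul_of_nonneg_left hk2 (hθ m i)]
      rw [Finset.sum_add_distrib, ← Finset.sum_mul] at hs
      linarith
  intro q hq n d hn hnN hacc
  have h := submod (n+1) d (by omega) (by omega)
  rw [show n+1+1 = n+2 by omega] at h
  linarith
end
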